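/- Assume all potentials K_{ij} satisfy assumption (Pot), and let f^ε be the measure solution to the kinetic system ∂_t f_i^ε + v·∇_x f_i^ε = (1/ε)∇_v·((v + ∑_{j=1}^N ∇K_{ij} * ρ_j^ε) f_i^ε) with compactly supported initial data f_0^ε ∈ P_1(R^{2d})^N. Then there exists an increasing function R(T), independent of ε, such that for every T > 0 the support of f^ε(t) is contained in the ball B_{R(T)} for all t ∈ [0,T] and all ε > 0. The function R(T) depends only on the support of f_0^ε and on Ξ = ∑_{i,j=1}^N ||∇K_{ij}||_{L^∞}. -/

import Mathlib

open MeasureTheory Filter Topology Metric Set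
open scoped ENNReal NNReal RealInnerProductSpace BigOperators

noncomputable section

/-- Euclidean space `ℝ^d`. -/
abbrev Euc (d : ℕ) : Type := EuclideanSpace ℝ (Fin d)

/-- `γ` is a coupling of `μ` and `ν`. -/
def IsCoupling {α : Type} [MeasurableSpace α] (γ : Measure (α × α)) (μ ν : Measure α) : Prop :=
  γ.map Prod.fst = μ ∧ γ.map Prod.snd = ν

/-- The 1-Wasserstein distance between two measures. -/
noncomputable def W1 {α : Type} [MeasurableSpace α] [PseudoMetricSpace α]
    (μ ν : Measure α) : ℝ :=
  sInf { c | ∃ γ : Measure (α × α), IsProbabilityMeasure γ ∧ IsCoupling γ μ ν ∧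
    c = ∫ p, dist p.1 p.2 ∂γ }

/-- The 1-Wasserstein distance between `N`-tuples of measures: the sum of the
componentwise distances. -/
noncomputable def W1N {α : Type} [MeasurableSpace α] [PseudoMetricSpace α] {N : ℕ}
    (f g : Fin N → Measure α) : ℝ := ∑ i, W1 (f i) (g i)

/-- `μ` is a probability measure with finite first moment (i.e. `μ ∈ 𝒫₁`). -/
def MemP1 {E : Type} [NormedAddCommGroup E] [MeasurableSpace E] (μ : Measure E) : Prop :=
  IsProbabilityMeasure μ ∧ Integrable (fun x => ‖x‖) μ

/-- The (topological) support of a measure: points all of whose neighbourhoods have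
positive measure. -/
def msupport {α : Type} [TopologicalSpace α] [MeasurableSpace α] (μ : Measure α) : Set α :=
  {x | ∀ U ∈ nhds x, μ U ≠ 0}

/-- Assumption (Pot): `Q ∈ C²(ℝ^d)` and `∇Q ∈ W^{1,∞}(ℝ^d)`. -/
def Pot {d : ℕ} (Q : Euc d → ℝ) : Prop :=
  ContDiff ℝ 2 Q ∧ (∃ C : ℝ, ∀ x, ‖gradient Q x‖ ≤ C) ∧
    ∃ L : ℝ≥0, LipschitzWith L (gradient Q)

/-- Convolution `∇K * ρ` of the gradient of a potential with a measure. -/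
noncomputable def gradConv {d : ℕ} (K : Euc d → ℝ) (ρ : Measure (Euc d)) (x : Euc d) :
    Euc d :=
  ∫ y, gradient K (x - y) ∂ρ

/-- Convolution `∇K * ρ` of the gradient of a potential with a density function. -/
noncomputable def gradConvF {d : ℕ} (K : Euc d → ℝ) (ρ : Euc d → ℝ) (x : Euc d) : Euc d :=
  ∫ y, ρ y • gradient K (x - y)

/-- The force field `E_i[f](x) = -∑_j (∇K_{ij} * ρ_j)(x)`. -/
noncomputable def fieldOf {d N : ℕ} (K : Fin N → Fin N → Euc d → ℝ)
    (ρ : Fin N → Measure (Euc d)) (i : Fin N) (x : Euc d) : Euc d :=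
  - ∑ j, gradConv (K i j) (ρ j) x

/-- Spatial marginal `ρ = ∫ f(·,v) dv` of a phase-space measure. -/
noncomputable def xmarg {d : ℕ} (μ : Measure (Euc d × Euc d)) : Measure (Euc d) :=
  μ.map Prod.fst

/-- Spatial density `ρ(x) = ∫ f(x,v) dv` of a phase-space density. -/
noncomputable def xdens {d : ℕ} (f : Euc d × Euc d → ℝ) (x : Euc d) : ℝ :=
  ∫ v, f (x, v)

/-- Measure solution (Definition 3.1) of the kinetic system
`∂_t f_i + v·∇_x f_i = (1/ε)∇_v·(v f_i) + (1/ε)∇_v·((∑_j ∇K_{ij} * ρ_j) f_i)`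
with initial datum `f0`: the field `E[f] = (-∑_j ∇K_{ij} * ρ_j)_i` satisfies
(H1)–(H3), and `f(t)` is the push-forward of `f0` along the characteristic flow of
`dX/dt = V`, `dV/dt = -(1/ε)V + (1/ε)E_i[f](t,X)`. -/
def IsMeasureSolution {d N : ℕ} (ε : ℝ) (K : Fin N → Fin N → Euc d → ℝ)
    (f0 : Fin N → Measure (Euc d × Euc d))
    (f : ℝ → Fin N → Measure (Euc d × Euc d)) : Prop :=
  -- (H1) continuity of the field
  (∀ i, Continuous (fun q : ℝ × Euc d => fieldOf K (fun j => xmarg (f q.1 j)) i q.2)) ∧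
  -- (H2) sublinear growth of the field
  (∀ i, ∃ C > 0, ∀ t : ℝ, ∀ x, ‖fieldOf K (fun j => xmarg (f t j)) i x‖ ≤ C * (1 + ‖x‖)) ∧
  -- (H3) local Lipschitz continuity in `x`, uniformly in `t`
  (∀ i, ∀ S : Set (Euc d), IsCompact S → ∃ L > 0, ∀ t : ℝ, ∀ x ∈ S, ∀ y ∈ S,
      ‖fieldOf K (fun j => xmarg (f t j)) i x - fieldOf K (fun j => xmarg (f t j)) i y‖
        ≤ L * ‖x - y‖) ∧
  -- `f(t)` is the push-forward of `f0` along the characteristic flow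
  ∃ Φ : Fin N → ℝ → (Euc d × Euc d) → (Euc d × Euc d),
    (∀ i p, Φ i 0 p = p) ∧
    (∀ i p t, HasDerivAt (fun s => Φ i s p)
      ((Φ i t p).2,
        ε⁻¹ • (fieldOf K (fun j => xmarg (f t j)) i (Φ i t p).1 - (Φ i t p).2)) t) ∧
    (∀ t i, f t i = (f0 i).map (Φ i t))

/-- Proposition 3.2: the supports of the measure solutions `f^ε` are
contained in a ball `B_{R(T)}` with `R(T)` increasing and independent of `ε`. -/
theorem stmt11 {d N : ℕ}
    (K : Fin N → Fin N → Euc d → ℝ) (hK : ∀ i j, Pot (K i j))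
    (R0 : ℝ)
    (f0 : ℝ → Fin N → Measure (Euc d × Euc d))
    (hf0 : ∀ ε > (0 : ℝ), ∀ i, MemP1 (f0 ε i))
    (hf0s : ∀ ε > (0 : ℝ), ∀ i, msupport (f0 ε i) ⊆ closedBall (0 : Euc d × Euc d) R0)
    (f : ℝ → ℝ → Fin N → Measure (Euc d × Euc d))
    (hsol : ∀ ε > (0 : ℝ), IsMeasureSolution ε K (f0 ε) (f ε)) :
    ∃ R : ℝ → ℝ, Monotone R ∧
      ∀ T > (0 : ℝ), ∀ ε > (0 : ℝ), ∀ t ∈ Set.Icc (0 : ℝ) T, ∀ i,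
        msupport (f ε t i) ⊆ closedBall (0 : Euc d × Euc d) (R T) := by
  classical
  -- uniform bounds on the gradients of the potentials
  have hCex : ∀ i j, ∃ C : ℝ, ∀ x, ‖gradient (K i j) x‖ ≤ C := fun i j => (hK i j).2.1
  choose C hCb using hCex
  have hC0 : ∀ i j, 0 ≤ C i j := fun i j => le_trans (norm_nonneg _) (hCb i j 0)
  set Ξ : ℝ := ∑ i, ∑ j, C i j with hΞdef
  have hΞ0 : 0 ≤ Ξ :=
    Finset.sum_nonneg fun i _ => Finset.sum_nonneg fun j _ => hC0 i j
  set R0' : ℝ := max R0 0 with hR0'def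
  have hR0'0 : 0 ≤ R0' := le_max_right _ _
  set M : ℝ := R0' + Ξ with hMdef
  have hM0 : 0 ≤ M := by positivity
  refine ⟨fun T => R0' + M * (T + 1), ?_, ?_⟩
  · intro a b hab
    simp only
    nlinarith
  intro T hT ε hε t ht i x hx
  obtain ⟨hH1, hH2, hH3, Φ, hΦ0, hΦd, hΦf⟩ := hsol ε hε
  -- mass of the spatial marginals is at most 1
  have hmass : ∀ (s : ℝ) (j : Fin N), (xmarg (f ε s j)) Set.univ ≤ 1 := by
    intro s j
    have hprob : IsProbabilityMeasure (f0 ε j) := (hf0 ε hε j).1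
    have h1 : (f ε s j) Set.univ ≤ 1 := by
      rw [hΦf s j]
      by_cases hmeas : AEMeasurable (Φ j s) (f0 ε j)
      · rw [Measure.map_apply_of_aemeasurable hmeas MeasurableSet.univ]
        simp [hprob.measure_univ]
      · rw [Measure.map_of_not_aemeasurable hmeas]
        simp
    unfold xmarg
    rwa [Measure.map_apply_of_aemeasurable measurable_fst.aemeasurable
      MeasurableSet.univ]
  -- uniform bound on the field
  have hfield : ∀ (s : ℝ) (i' : Fin N) (y : Euc d),
      ‖fieldOf K (fun j => xmarg (f ε s j)) i' y‖ ≤ Ξ := by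
    intro s i' y
    have hconv : ∀ j : Fin N, ‖gradConv (K i' j) (xmarg (f ε s j)) y‖ ≤ C i' j := by
      intro j
      haveI : IsFiniteMeasure (xmarg (f ε s j)) :=
        ⟨lt_of_le_of_lt (hmass s j) ENNReal.one_lt_top⟩
      have hb : ∀ᵐ z ∂(xmarg (f ε s j)), ‖gradient (K i' j) (y - z)‖ ≤ C i' j :=
        Filter.Eventually.of_forall fun z => hCb i' j (y - z)
      calc ‖gradConv (K i' j) (xmarg (f ε s j)) y‖
          ≤ C i' j * ((xmarg (f ε s j)) Set.univ).toReal :=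
            norm_integral_le_of_norm_le_const hb
        _ ≤ C i' j * 1 := by
            have : ((xmarg (f ε s j)) Set.univ).toReal ≤ (1 : ℝ≥0∞).toReal :=
              ENNReal.toReal_mono ENNReal.one_ne_top (hmass s j)
            simp only [ENNReal.toReal_one] at this
            exact mul_le_mul_of_nonneg_left this (hC0 i' j)
        _ = C i' j := mul_one _
    calc ‖fieldOf K (fun j => xmarg (f ε s j)) i' y‖
        = ‖∑ j, gradConv (K i' j) (xmarg (f ε s j)) y‖ := by
          unfold fieldOf; rw [norm_neg]
      _ ≤ ∑ j, ‖gradConv (K i' j) (xmarg (f ε s j)) y‖ := norm_sum_le _ _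
      _ ≤ ∑ j, C i' j := Finset.sum_le_sum fun j _ => hconv j
      _ ≤ Ξ := by
          rw [hΞdef]
          exact Finset.single_le_sum (f := fun i => ∑ j, C i j)
            (fun k _ => Finset.sum_nonneg fun j _ => hC0 k j) (Finset.mem_univ i')
  -- trajectory bound
  have htraj : ∀ p : Euc d × Euc d, ‖p‖ ≤ R0' → ∀ s ∈ Set.Icc (0:ℝ) T,
      ‖Φ i s p‖ ≤ R0' + M * (T + 1) := by
    intro p hp s hs
    set V : ℝ → Euc d := fun s => (Φ i s p).2 with hVdef
    set X : ℝ → Euc d := fun s => (Φ i s p).1 with hXdef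
    set E : ℝ → Euc d := fun s =>
      fieldOf K (fun j => xmarg (f ε s j)) i (X s) with hEdef
    have hV' : ∀ u : ℝ, HasDerivAt V (ε⁻¹ • (E u - V u)) u := by
      intro u
      have := (ContinuousLinearMap.snd ℝ (Euc d) (Euc d)).hasFDerivAt.comp_hasDerivAt
        u (hΦd i p u)
      exact this
    have hX' : ∀ u : ℝ, HasDerivAt X (V u) u := by
      intro u
      have := (ContinuousLinearMap.fst ℝ (Euc d) (Euc d)).hasFDerivAt.comp_hasDerivAt
        u (hΦd i p u)
      exact this
    have hV0 : ‖V 0‖ ≤ R0' := by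
      have : V 0 = p.2 := by simp [hVdef, hΦ0]
      rw [this]
      exact le_trans (norm_snd_le p) hp
    have hX0 : ‖X 0‖ ≤ R0' := by
      have : X 0 = p.1 := by simp [hXdef, hΦ0]
      rw [this]
      exact le_trans (norm_fst_le p) hp
    -- exponential damping estimate on the velocity
    set w : ℝ → Euc d := fun u => Real.exp (u / ε) • V u with hwdef
    have hexp' : ∀ u : ℝ, HasDerivAt (fun v : ℝ => Real.exp (v / ε))
        (Real.exp (u / ε) * ε⁻¹) u := by
      intro u
      have := ((hasDerivAt_id u).div_const ε).exp
      simpa [one_div] using this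
    have hw' : ∀ u : ℝ, HasDerivAt w ((Real.exp (u / ε) * ε⁻¹) • E u) u := by
      intro u
      have h := (hexp' u).smul (hV' u)
      refine h.congr_deriv ?_
      rw [smul_smul, smul_sub]
      module
    set B : ℝ → ℝ := fun u => ‖V 0‖ + (Ξ * Real.exp (u / ε) - Ξ) with hBdef
    have hB' : ∀ u : ℝ, HasDerivAt B (Ξ * (Real.exp (u / ε) * ε⁻¹)) u := by
      intro u
      exact (((hexp' u).const_mul Ξ).sub_const Ξ).const_add _
    have hwB : ∀ u ∈ Set.Icc (0:ℝ) T, ‖w u‖ ≤ B u := by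
      have hcont : ContinuousOn w (Set.Icc 0 T) :=
        fun u _ => (hw' u).continuousAt.continuousWithinAt
      have hderiv : ∀ u ∈ Set.Ico (0:ℝ) T,
          HasDerivWithinAt w ((Real.exp (u / ε) * ε⁻¹) • E u) (Set.Ici u) u :=
        fun u _ => (hw' u).hasDerivWithinAt
      have ha : ‖w 0‖ ≤ B 0 := by simp [hwdef, hBdef]
      have hbound : ∀ u ∈ Set.Ico (0:ℝ) T,
          ‖(Real.exp (u / ε) * ε⁻¹) • E u‖ ≤ Ξ * (Real.exp (u / ε) * ε⁻¹) := by
        intro u _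
        rw [norm_smul]
        have hpos : (0:ℝ) ≤ Real.exp (u / ε) * ε⁻¹ := by positivity
        rw [Real.norm_eq_abs, abs_of_nonneg hpos, mul_comm Ξ]
        exact mul_le_mul_of_nonneg_left (hfield u i (X u)) hpos
      exact fun u hu =>
        image_norm_le_of_norm_deriv_right_le_deriv_boundary hcont hderiv ha hB' hbound hu
    have hVb : ∀ u ∈ Set.Icc (0:ℝ) T, ‖V u‖ ≤ M := by
      intro u hu
      have h1 := hwB u hu
      have h2 : ‖w u‖ = Real.exp (u / ε) * ‖V u‖ := by
        rw [hwdef]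
        simp [norm_smul, Real.norm_eq_abs, abs_of_pos (Real.exp_pos _)]
      have h3 : (1:ℝ) ≤ Real.exp (u / ε) :=
        Real.one_le_exp (div_nonneg hu.1 hε.le)
      rw [h2, hBdef] at h1
      have hVn : (0:ℝ) ≤ ‖V u‖ := norm_nonneg _
      have : ‖V u‖ ≤ ‖V 0‖ + Ξ := by nlinarith [norm_nonneg (V 0)]
      calc ‖V u‖ ≤ ‖V 0‖ + Ξ := this
        _ ≤ R0' + Ξ := by linarith
        _ = M := by rw [hMdef]
    -- position bound
    have hXb : ‖X s - X 0‖ ≤ M * (s - 0) := by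
      apply norm_image_sub_le_of_norm_deriv_right_le_segment
        (f' := V) (fun u _ => (hX' u).continuousAt.continuousWithinAt)
        (fun u hu => (hX' u).hasDerivWithinAt)
        (fun u hu => hVb u ⟨hu.1, le_of_lt hu.2⟩) s hs
    have hXs : ‖X s‖ ≤ R0' + M * T := by
      have h1 : ‖X s‖ ≤ ‖X s - X 0‖ + ‖X 0‖ := by
        simpa using norm_add_le (X s - X 0) (X 0)
      have h2 : M * (s - 0) ≤ M * T := by
        apply mul_le_mul_of_nonneg_left _ hM0
        linarith [hs.2]
      linarith
    have hVs : ‖V s‖ ≤ M := hVb s hs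
    have : ‖Φ i s p‖ = max ‖X s‖ ‖V s‖ := rfl
    rw [this]
    apply max_le
    · nlinarith
    · nlinarith
  -- conclude the support inclusion
  simp only [mem_closedBall, dist_zero_right]
  by_contra hxR
  push_neg at hxR
  set U : Set (Euc d × Euc d) := (closedBall (0 : Euc d × Euc d) (R0' + M * (T + 1)))ᶜ
    with hUdef
  have hxU : x ∈ U := by
    simp [hUdef, mem_closedBall, dist_zero_right]
    linarith
  have hUnhds : U ∈ nhds x := (isClosed_closedBall.isOpen_compl).mem_nhds hxU
  have hzero : (f ε t i) U = 0 := by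
    rw [hΦf t i]
    by_cases hmeas : AEMeasurable (Φ i t) (f0 ε i)
    · rw [Measure.map_apply_of_aemeasurable hmeas
        (isClosed_closedBall.measurableSet.compl)]
      have hnull : (f0 ε i) (msupport (f0 ε i))ᶜ = 0 := by
        apply measure_null_of_locally_null
        intro y hy
        simp only [msupport, Set.mem_compl_iff, Set.mem_setOf_eq, not_forall] at hy
        obtain ⟨u, hu, hu0⟩ := hy
        push_neg at hu0
        exact ⟨u, mem_nhdsWithin_of_mem_nhds hu, hu0⟩
      refine measure_mono_null ?_ hnull
      intro p hpU hpS
      have hpb : ‖p‖ ≤ R0' := by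
        have := hf0s ε hε i hpS
        simp only [mem_closedBall, dist_zero_right] at this
        exact le_trans this (le_max_left _ _)
      have := htraj p hpb t ht
      simp only [hUdef, Set.mem_preimage, Set.mem_compl_iff, mem_closedBall,
        dist_zero_right, not_le] at hpU
      linarith
    · rw [Measure.map_of_not_aemeasurable hmeas]
      simp
  exact hx U hUnhds hzero
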